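/- Let A ⊆ ℝ^d be finite, K = pos A, L = lpos A its lineality space, and let pr A be the orthogonal projection of A onto L^⊥. Then the polar cone K° of K equals L^⊥ ∩ (pos(pr A))°, and K° is a full-dimensional cone inside the subspace L^⊥. -/

import Mathlib

open scoped RealInnerProductSpace

/-- The conical hull (set of nonnegative combinations) of a set `V` in `ℝ^d`. -/
def posHull {d : ℕ} (V : Set (EuclideanSpace ℝ (Fin d))) : Set (EuclideanSpace ℝ (Fin d)) :=
  {x | ∃ (s : Finset (EuclideanSpace ℝ (Fin d))) (c : EuclideanSpace ℝ (Fin d) → ℝ),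
    ↑s ⊆ V ∧ (∀ v ∈ s, 0 ≤ c v) ∧ x = ∑ v ∈ s, c v • v}

/-- The lineality set `pos A ∩ (− pos A)` of the conical hull of `A`. -/
def linealitySet {d : ℕ} (A : Set (EuclideanSpace ℝ (Fin d))) : Set (EuclideanSpace ℝ (Fin d)) :=
  posHull A ∩ (-posHull A)

/-!
Let `L = K ∩ -K` be the lineality space. If `a, -a ∈ K` and `x ∈ K°`, then
`⟪a, x⟫ ≤ 0` and `-⟪a, x⟫ ≤ 0`, so `K° ⊆ Lᗮ`; and for `x ∈ Lᗮ` the self-adjointness of the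
projection gives `⟪pr a, x⟫ = ⟪a, x⟫`, which yields the decomposition of `K°`.

By conic Carathéodory, `K = pos A` is a finite union of cones over linearly independent subsets
of `A`, hence closed. So Farkas' lemma applies: a vector `y` orthogonal to `K°` lies in `K`, and
so does `-y`. Thus `(span K°)ᗮ ⊆ L`, and taking orthogonal complements, `span K° = Lᗮ`.
-/

open Submodule

namespace PointedCone

variable {E : Type*} [AddCommGroup E] [Module ℝ E]

theorem mem_hull_finset_iff {s : Finset E} {x : E} :
    x ∈ hull ℝ (s : Set E) ↔ ∃ c : E → ℝ, (∀ v ∈ s, 0 ≤ c v) ∧ ∑ v ∈ s, c v • v = x := by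
  constructor
  · intro hx
    obtain ⟨c, -, rfl⟩ := mem_span_finset.1 hx
    exact ⟨fun v => c v, fun v _ => (c v).2, rfl⟩
  · rintro ⟨c, hc, rfl⟩
    refine sum_mem fun v hv => ?_
    simpa only [Nonneg.mk_smul] using
      Submodule.smul_mem _ (⟨c v, hc v hv⟩ : {r : ℝ // 0 ≤ r}) (subset_hull hv)

theorem exists_mem_hull_erase_of_not_linearIndepOn [DecidableEq E] {t : Finset E}
    (ht : ¬LinearIndepOn ℝ id (t : Set E)) {x : E} (hx : x ∈ hull ℝ (t : Set E)) :
    ∃ y ∈ t, x ∈ hull ℝ (t.erase y : Set E) := by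
  obtain ⟨c, hc, rfl⟩ := mem_hull_finset_iff.1 hx
  obtain ⟨g, hg, hpos⟩ : ∃ g : E → ℝ, ∑ v ∈ t, g v • v = 0 ∧ ∃ v ∈ t, 0 < g v := by
    obtain ⟨f, hf, v, hv, hfv⟩ := not_linearIndepOn_finset_iff.1 ht
    rcases hfv.lt_or_gt with hneg | hpos
    · exact ⟨-f, by simpa [neg_smul] using hf, v, hv, by simpa using hneg⟩
    · exact ⟨f, hf, v, hv, hpos⟩
  -- Shift the coefficients along `g` until the first one, at `y`, vanishes.
  obtain ⟨y, hy, hymin⟩ := (t.filter (0 < g ·)).exists_min_image (fun v => c v / g v)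
    (by simpa [Finset.filter_nonempty_iff] using hpos)
  rw [Finset.mem_filter] at hy
  set r := c y / g y
  have hr : 0 ≤ r := div_nonneg (hc y hy.1) hy.2.le
  refine ⟨y, hy.1, mem_hull_finset_iff.2 ⟨fun v => c v - r * g v, fun v hv => ?_, ?_⟩⟩
  · have hvt := Finset.mem_of_mem_erase hv
    rw [sub_nonneg]
    rcases le_or_gt (g v) 0 with hgv | hgv
    · exact (mul_nonpos_of_nonneg_of_nonpos hr hgv).trans (hc v hvt)
    · exact (le_div_iff₀ hgv).1 (hymin v (Finset.mem_filter.2 ⟨hvt, hgv⟩))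
  · rw [Finset.sum_erase t (by simp [r, div_mul_cancel₀ _ hy.2.ne'])]
    simp only [sub_smul, Finset.sum_sub_distrib, mul_smul, ← Finset.smul_sum, hg, smul_zero,
      sub_zero]

theorem exists_linearIndepOn_subset_of_mem_hull {s : Finset E} {x : E}
    (hx : x ∈ hull ℝ (s : Set E)) :
    ∃ t ⊆ s, LinearIndepOn ℝ id (t : Set E) ∧ x ∈ hull ℝ (t : Set E) := by
  classical
  induction s using Finset.strongInduction with
  | H s ih =>
    by_cases hs : LinearIndepOn ℝ id (s : Set E)
    · exact ⟨s, subset_rfl, hs, hx⟩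
    obtain ⟨y, hy, hxy⟩ := exists_mem_hull_erase_of_not_linearIndepOn hs hx
    obtain ⟨t, hts, ht, hxt⟩ := ih _ (Finset.erase_ssubset hy) hxy
    exact ⟨t, hts.trans (s.erase_subset y), ht, hxt⟩

variable [TopologicalSpace E] [IsTopologicalAddGroup E] [ContinuousSMul ℝ E] [T2Space E]

theorem isClosed_hull_range_of_linearIndependent {ι : Type*} [Finite ι] {v : ι → E}
    (hv : LinearIndependent ℝ v) : IsClosed (hull ℝ (Set.range v) : Set E) := by
  cases nonempty_fintype ι
  have himage :
      (hull ℝ (Set.range v) : Set E) = Fintype.linearCombination ℝ v '' Set.Ici 0 := by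
    ext x
    simp only [SetLike.mem_coe, mem_span_range_iff_exists_fun, Set.mem_image, Set.mem_Ici,
      Fintype.linearCombination_apply]
    constructor
    · rintro ⟨c, rfl⟩
      exact ⟨fun i => c i, fun i => (c i).2, rfl⟩
    · rintro ⟨c, hc, rfl⟩
      exact ⟨fun i => ⟨c i, hc i⟩, rfl⟩
  rw [himage]
  exact (LinearMap.isClosedEmbedding_of_injective (LinearMap.ker_eq_bot.2
    hv.fintypeLinearCombination_injective)).isClosedMap _ isClosed_Ici

theorem isClosed_hull_of_finite {s : Set E} (hs : s.Finite) :
    IsClosed (hull ℝ s : Set E) := by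
  classical
  lift s to Finset E using hs
  have hunion : (hull ℝ (s : Set E) : Set E) =
      ⋃ t ∈ s.powerset.filter (fun t : Finset E => LinearIndepOn ℝ id (t : Set E)),
        (hull ℝ (t : Set E) : Set E) := by
    ext x
    simp only [SetLike.mem_coe, Set.mem_iUnion, Finset.mem_filter, Finset.mem_powerset,
      exists_prop]
    constructor
    · intro hx
      obtain ⟨t, hts, ht, hxt⟩ := exists_linearIndepOn_subset_of_mem_hull hx
      exact ⟨t, ⟨hts, ht⟩, hxt⟩
    · rintro ⟨t, ⟨hts, -⟩, hxt⟩
      exact span_mono (Finset.coe_subset.2 hts) hxt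
  rw [hunion]
  refine isClosed_biUnion_finset fun t ht => ?_
  simpa using isClosed_hull_range_of_linearIndependent (Finset.mem_filter.1 ht).2

end PointedCone

section Polar

variable {E : Type*} [NormedAddCommGroup E] [InnerProductSpace ℝ E]

def polarCone (s : Set E) : Set E := {x | ∀ a ∈ s, ⟪a, x⟫ ≤ 0}

theorem polarCone_hull (s : Set E) :
    polarCone (PointedCone.hull ℝ s : Set E) = polarCone s := by
  refine Set.Subset.antisymm (fun x hx a ha => hx a (PointedCone.subset_hull ha))
    fun x hx a ha => ?_
  induction ha using span_induction with
  | mem a ha => exact hx a ha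
  | zero => simp
  | add a b _ _ ha hb => rw [inner_add_left]; exact add_nonpos ha hb
  | smul t a _ ha =>
    rw [← Nonneg.coe_smul, real_inner_smul_left]
    exact mul_nonpos_of_nonneg_of_nonpos t.2 ha

theorem polarCone_subset_orthogonal_span_inter_neg (s : Set E) :
    polarCone s ⊆ (span ℝ (s ∩ -s))ᗮ := by
  intro x hx
  rw [SetLike.mem_coe, mem_orthogonal']
  suffices span ℝ (s ∩ -s) ≤ LinearMap.ker (innerₛₗ ℝ x) from fun u hu => this hu
  refine span_le.2 fun u ⟨hu, hnu⟩ => ?_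
  have h := hx (-u) hnu
  rw [inner_neg_left, neg_nonpos] at h
  change ⟪x, u⟫ = 0
  rw [real_inner_comm]
  exact le_antisymm (hx u hu) h

theorem inter_polarCone_starProjection_image (U : Submodule ℝ E) [U.HasOrthogonalProjection]
    (s : Set E) :
    (U : Set E) ∩ polarCone (U.starProjection '' s) = (U : Set E) ∩ polarCone s := by
  ext x
  simp only [Set.mem_inter_iff, polarCone, Set.forall_mem_image, Set.mem_ofPred_eq,
    SetLike.mem_coe]
  refine and_congr_right fun hx => ?_
  simp only [inner_starProjection_left_eq_right, starProjection_eq_self_iff.2 hx]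

theorem mem_of_forall_polarCone_inner_eq_zero [CompleteSpace E] {C : PointedCone ℝ E}
    (hC : IsClosed (C : Set E)) {y : E} (hy : ∀ x ∈ polarCone (C : Set E), ⟪x, y⟫ = 0) :
    y ∈ C := by
  by_contra hyC
  obtain ⟨z, hz, hyz⟩ := ProperCone.hyperplane_separation' ⟨C, hC⟩ hyC
  have hzy := hy (-z) fun a ha => by simpa [inner_neg_right] using hz a ha
  rw [inner_neg_left, real_inner_comm] at hzy
  linarith

theorem span_polarCone_eq_orthogonal [FiniteDimensional ℝ E] {C : PointedCone ℝ E}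
    (hC : IsClosed (C : Set E)) :
    span ℝ (polarCone (C : Set E)) = (span ℝ ((C : Set E) ∩ -C))ᗮ := by
  refine le_antisymm (span_le.2 (polarCone_subset_orthogonal_span_inter_neg _)) ?_
  have hlin : (span ℝ (polarCone (C : Set E)))ᗮ ≤ span ℝ ((C : Set E) ∩ -C) := by
    intro y hy
    rw [mem_orthogonal] at hy
    have hy' : ∀ x ∈ polarCone (C : Set E), ⟪x, y⟫ = 0 := fun x hx => hy x (subset_span hx)
    refine subset_span ⟨mem_of_forall_polarCone_inner_eq_zero hC hy', ?_⟩
    exact mem_of_forall_polarCone_inner_eq_zero hC fun x hx => by simp [hy' x hx]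
  simpa only [orthogonal_orthogonal] using orthogonal_le hlin

end Polar

theorem posHull_eq_hull {d : ℕ} (V : Set (EuclideanSpace ℝ (Fin d))) :
    posHull V = PointedCone.hull ℝ V := by
  ext x
  constructor
  · rintro ⟨s, c, hsV, hc, rfl⟩
    exact span_mono hsV (PointedCone.mem_hull_finset_iff.2 ⟨c, hc, rfl⟩)
  · intro hx
    obtain ⟨s, hsV, hxs⟩ := mem_span_finite_of_mem_span hx
    obtain ⟨c, hc, rfl⟩ := PointedCone.mem_hull_finset_iff.1 hxs
    exact ⟨s, c, hsV, hc, rfl⟩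

theorem polarCone_posHull {d : ℕ} (V : Set (EuclideanSpace ℝ (Fin d))) :
    polarCone (posHull V) = polarCone V := by
  rw [posHull_eq_hull, polarCone_hull]

/-- With `K = pos A`, `L = lpos A`, and `pr A` the orthogonal projection of `A` to `L^⊥`,
the polar cone `K°` equals `L^⊥ ∩ (pos (pr A))°`, and `K°` spans `L^⊥` (i.e. is
full-dimensional in `L^⊥`). -/
theorem polar_cone_decomposition (d : ℕ) (A : Finset (EuclideanSpace ℝ (Fin d))) :
    {x : EuclideanSpace ℝ (Fin d) |
        ∀ a ∈ posHull (A : Set (EuclideanSpace ℝ (Fin d))), ⟪a, x⟫ ≤ 0} =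
      (((Submodule.span ℝ (linealitySet (A : Set (EuclideanSpace ℝ (Fin d)))))ᗮ :
          Submodule ℝ (EuclideanSpace ℝ (Fin d))) : Set (EuclideanSpace ℝ (Fin d))) ∩
        {x : EuclideanSpace ℝ (Fin d) | ∀ b ∈ posHull
            ((fun a => ((Submodule.orthogonalProjectionOnto
                (Submodule.span ℝ (linealitySet (A : Set (EuclideanSpace ℝ (Fin d)))))ᗮ a :
              (Submodule.span ℝ (linealitySet (A : Set (EuclideanSpace ℝ (Fin d)))))ᗮ) :
                EuclideanSpace ℝ (Fin d))) '' (A : Set (EuclideanSpace ℝ (Fin d)))),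
          ⟪b, x⟫ ≤ 0} ∧
    Submodule.span ℝ {x : EuclideanSpace ℝ (Fin d) |
        ∀ a ∈ posHull (A : Set (EuclideanSpace ℝ (Fin d))), ⟪a, x⟫ ≤ 0} =
      (Submodule.span ℝ (linealitySet (A : Set (EuclideanSpace ℝ (Fin d)))))ᗮ := by
  set L := span ℝ (linealitySet (A : Set (EuclideanSpace ℝ (Fin d))))
  refine ⟨?_, ?_⟩
  · change polarCone (posHull ↑A) = ↑Lᗮ ∩ polarCone (posHull (Lᗮ.starProjection '' ↑A))
    rw [polarCone_posHull (Lᗮ.starProjection '' _), inter_polarCone_starProjection_image,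
      ← polarCone_posHull (A : Set (EuclideanSpace ℝ (Fin d)))]
    exact (Set.inter_eq_right.2 (polarCone_subset_orthogonal_span_inter_neg _)).symm
  · change span ℝ (polarCone (posHull ↑A)) = Lᗮ
    simp only [L, linealitySet, posHull_eq_hull]
    exact span_polarCone_eq_orthogonal (PointedCone.isClosed_hull_of_finite A.finite_toSet)
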